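/- Let K ⊂ ℝᵈ be a convex body, θ ∈ S^{d−1}, and t ∈ [m_{K,θ}, h_K(θ)]. Then A_{K,θ}(t) ≥ (1/2)·((h_K(θ) − t)/(h_K(θ) − m_{K,θ}))^d. -/

import Mathlib

/-!
Slicing `K` by the hyperplanes `⟪θ, x⟫ = s` (Fubini in an isometric splitting `ℝᵈ ≅ ℝ × ℝᵈ⁻¹`
whose first coordinate is `⟪θ, ·⟫`, together with the fact that the `(d-1)`-dimensional Hausdorff
measure of a hyperplane is a fixed multiple of its Lebesgue measure) shows that `A_{K,θ}(t)` is a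
fixed multiple of the volume of the cap `K ∩ {⟪θ, x⟫ ≥ t}`. If `x₀ ∈ K` attains `h = h_K(θ)`, the
homothety with centre `x₀` and ratio `(h - t) / (h - m)` maps the cap at level `m` into the cap at
level `t` by convexity, so the volume of the latter is at least that ratio to the power `d` times
the volume of the former, whose `A`-value is `1/2`.
-/

open MeasureTheory Set intervalIntegral
open scoped RealInnerProductSpace ENNReal

noncomputable section

/-- Euclidean space `ℝᵈ`. -/
abbrev Euc (d : ℕ) := EuclideanSpace ℝ (Fin d)

/-- A convex body: a compact convex set with nonempty interior. -/
def IsConvexBody {d : ℕ} (K : Set (Euc d)) : Prop :=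
  IsCompact K ∧ Convex ℝ K ∧ (interior K).Nonempty

/-- The support function `h_K(θ) = sup_{x ∈ K} ⟨θ, x⟩`. -/
def suppFn {d : ℕ} (K : Set (Euc d)) (θ : Euc d) : ℝ :=
  sSup ((fun x => ⟪θ, x⟫) '' K)

/-- The normalized parallel section function
`ψ_{K,θ}(t) = vol_{d-1}(K ∩ {y : ⟨θ,y⟩ = t}) / vol_d(K)`, where the `(d-1)`-dimensional
volume is Hausdorff measure. -/
def psi {d : ℕ} (K : Set (Euc d)) (θ : Euc d) (t : ℝ) : ℝ :=
  (μH[(d : ℝ) - 1] (K ∩ {y : Euc d | ⟪θ, y⟫ = t})).toReal / (volume K).toReal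

/-- `A_{K,θ}(t) = ∫_t^{h_K(θ)} ψ_{K,θ}(s) ds`. -/
def sectionTail {d : ℕ} (K : Set (Euc d)) (θ : Euc d) (t : ℝ) : ℝ :=
  ∫ s in t..(suppFn K θ), psi K θ s

section Homothety

variable {E : Type*} [NormedAddCommGroup E] [NormedSpace ℝ E] [MeasurableSpace E] [BorelSpace E]
  [FiniteDimensional ℝ E]

theorem Convex.ofReal_pow_mul_addHaar_inter_le (μ : Measure E) [μ.IsAddHaarMeasure] {K : Set E}
    (hK : Convex ℝ K) (ℓ : E →ₗ[ℝ] ℝ) {x₀ : E} (hx₀ : x₀ ∈ K) {m t : ℝ} (hmt : m ≤ t)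
    (ht : t ≤ ℓ x₀) :
    ENNReal.ofReal (((ℓ x₀ - t) / (ℓ x₀ - m)) ^ Module.finrank ℝ E) * μ (K ∩ {x | m ≤ ℓ x})
      ≤ μ (K ∩ {x | t ≤ ℓ x}) := by
  set r := (ℓ x₀ - t) / (ℓ x₀ - m)
  have hr₀ : 0 ≤ r := div_nonneg (by linarith) (by linarith)
  have hr₁ : r ≤ 1 := div_le_one_of_le₀ (by linarith) (by linarith)
  have hr : r * (ℓ x₀ - m) = ℓ x₀ - t := by
    rcases (sub_nonneg.2 (hmt.trans ht)).eq_or_lt with h | h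
    · rw [← h, mul_zero]; linarith
    · exact div_mul_cancel₀ _ h.ne'
  calc ENNReal.ofReal (r ^ Module.finrank ℝ E) * μ (K ∩ {x | m ≤ ℓ x})
      = μ (AffineMap.homothety x₀ r '' (K ∩ {x | m ≤ ℓ x})) := by
        rw [Measure.addHaar_image_homothety, abs_of_nonneg (pow_nonneg hr₀ _)]
    _ ≤ μ (K ∩ {x | t ≤ ℓ x}) := by
        refine measure_mono ?_
        rintro _ ⟨x, ⟨hxK, hxm⟩, rfl⟩
        rw [AffineMap.homothety_apply, vsub_eq_sub, vadd_eq_add, add_comm]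
        refine ⟨hK.add_smul_sub_mem hx₀ hxK ⟨hr₀, hr₁⟩, ?_⟩
        simp only [mem_ofPred_eq, map_add, map_smul, map_sub, smul_eq_mul] at hxm ⊢
        linarith [mul_le_mul_of_nonneg_left hxm hr₀]

end Homothety

section Slicing

variable {n : ℕ}

theorem exists_linearIsometryEquiv_inner_eq_fst {θ : Euc (n + 1)} (hθ : ‖θ‖ = 1) :
    ∃ e : WithLp 2 (ℝ × Euc n) ≃ₗᵢ[ℝ] Euc (n + 1), ∀ p, ⟪θ, e p⟫ = p.fst := by
  let v := (OrthonormalBasis.singleton Unit ℝ).prod (EuclideanSpace.basisFun (Fin n) ℝ)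
  obtain ⟨b, hb⟩ : ∃ b : OrthonormalBasis (Unit ⊕ Fin n) ℝ (Euc (n + 1)), b (.inl ()) = θ := by
    have hθ' : Orthonormal ℝ (({Sum.inl ()} : Set (Unit ⊕ Fin n)).domRestrict fun _ ↦ θ) :=
      ⟨fun _ ↦ hθ, fun i j hij ↦ (hij (Subsingleton.elim i j)).elim⟩
    obtain ⟨b, hb⟩ := hθ'.exists_orthonormalBasis_extension_of_card_eq (by simp [add_comm])
    exact ⟨b, hb _ rfl⟩
  refine ⟨v.equiv b (Equiv.refl _), fun p ↦ ?_⟩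
  rw [← hb, show b (.inl ()) = v.equiv b (Equiv.refl _) (v (.inl ())) by simp,
    LinearIsometryEquiv.inner_map_map]
  simp [v, WithLp.prod_inner_apply]

theorem isometry_toLp_two_mk {α β : Type*} [SeminormedAddCommGroup α]
    [SeminormedAddCommGroup β] (a : α) :
    Isometry fun b : β ↦ WithLp.toLp 2 (a, b) :=
  Isometry.of_dist_eq fun b b' ↦ by simp [WithLp.prod_dist_eq_of_L2]

theorem exists_lintegral_hausdorffMeasure_inter_hyperplane {θ : Euc (n + 1)} (hθ : ‖θ‖ = 1) :
    ∃ c : NNReal, ∀ C : Set (Euc (n + 1)), MeasurableSet C →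
      Measurable (fun s ↦ μH[n] (C ∩ {x | ⟪θ, x⟫ = s})) ∧
      ∫⁻ s, μH[n] (C ∩ {x | ⟪θ, x⟫ = s}) = c * volume C := by
  obtain ⟨e, he⟩ := exists_linearIsometryEquiv_inner_eq_fst hθ
  set F : ℝ × Euc n → Euc (n + 1) := fun p ↦ e (WithLp.toLp 2 p)
  have hF : MeasurePreserving F :=
    e.measurePreserving.comp (WithLp.volume_preserving_toLp ℝ (Euc n))
  set c := Measure.addHaarScalarFactor (μH[n] : Measure (Euc n)) volume
  have hslice : ∀ C s, μH[n] (C ∩ {x | ⟪θ, x⟫ = s}) = c * volume (Prod.mk s ⁻¹' (F ⁻¹' C)) := by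
    intro C s
    have himage : C ∩ {x | ⟪θ, x⟫ = s} = (fun y ↦ F (s, y)) '' (Prod.mk s ⁻¹' (F ⁻¹' C)) := by
      ext x
      constructor
      · rintro ⟨hxC, rfl⟩
        have hx : F (⟪θ, x⟫, (e.symm x).snd) = x := by
          have hfst : ⟪θ, x⟫ = (e.symm x).fst := by simpa using he (e.symm x)
          rw [hfst]
          exact e.apply_symm_apply x
        exact ⟨(e.symm x).snd, by simpa [hx] using hxC, hx⟩
      · rintro ⟨y, hy, rfl⟩
        exact ⟨hy, he _⟩
    have hiso : Isometry fun y ↦ F (s, y) := e.isometry.comp (isometry_toLp_two_mk s)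
    rw [himage, hiso.hausdorffMeasure_image (.inl n.cast_nonneg),
      Measure.isAddLeftInvariant_eq_smul μH[n] volume]
    rfl
  refine ⟨c, fun C hC ↦ ?_⟩
  have hmeas := measurable_measure_prodMk_left (ν := (volume : Measure (Euc n))) (hF.measurable hC)
  simp_rw [hslice]
  refine ⟨hmeas.const_mul _, ?_⟩
  rw [lintegral_const_mul _ hmeas, ← Measure.prod_apply (hF.measurable hC),
    ← Measure.volume_eq_prod, hF.measure_preimage hC.nullMeasurableSet]

end Slicing

section SupportFunction

variable {d : ℕ} {K : Set (Euc d)}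

theorem inner_le_suppFn (hK : IsCompact K) (θ : Euc d) {x : Euc d} (hx : x ∈ K) :
    ⟪θ, x⟫ ≤ suppFn K θ :=
  le_csSup (hK.image (by fun_prop)).bddAbove (mem_image_of_mem _ hx)

theorem exists_mem_inner_eq_suppFn (hK : IsCompact K) (hne : K.Nonempty) (θ : Euc d) :
    ∃ x ∈ K, ⟪θ, x⟫ = suppFn K θ :=
  (hK.image (by fun_prop)).sSup_mem (hne.image _)

end SupportFunction

theorem exists_sectionTail_eq_mul_volume {n : ℕ} {K : Set (Euc (n + 1))} (hK : IsCompact K)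
    {θ : Euc (n + 1)} (hθ : ‖θ‖ = 1) :
    ∃ R : NNReal, ∀ t ≤ suppFn K θ,
      sectionTail K θ t = R * (volume (K ∩ {x | t ≤ ⟪θ, x⟫})).toReal := by
  obtain ⟨c, hc⟩ := exists_lintegral_hausdorffMeasure_inter_hyperplane hθ
  set g := fun s ↦ μH[n] (K ∩ {x | ⟪θ, x⟫ = s})
  have hKm := hK.isClosed.measurableSet
  obtain ⟨hg, hgK⟩ := hc K hKm
  have hg_fin : ∀ᵐ s, g s < ⊤ :=
    ae_lt_top hg (by rw [hgK]; exact ENNReal.mul_ne_top ENNReal.coe_ne_top hK.measure_lt_top.ne)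
  have hpsi : ∀ s, psi K θ s = (g s).toReal / (volume K).toReal := by
    simp [psi, g]
  refine ⟨c / (volume K).toNNReal, fun t ht ↦ ?_⟩
  have hcap : ∫⁻ s in Icc t (suppFn K θ), g s = c * volume (K ∩ {x | t ≤ ⟪θ, x⟫}) := by
    rw [← lintegral_indicator measurableSet_Icc,
      ← (hc _ (hKm.inter (measurableSet_le measurable_const (by fun_prop)))).2]
    refine lintegral_congr fun s ↦ ?_
    have hslice : (K ∩ {x | t ≤ ⟪θ, x⟫}) ∩ {x | ⟪θ, x⟫ = s}
        = if s ∈ Icc t (suppFn K θ) then K ∩ {x | ⟪θ, x⟫ = s} else ∅ := by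
      ext x
      split_ifs with hs
      · exact ⟨fun ⟨⟨hx, _⟩, hxs⟩ ↦ ⟨hx, hxs⟩,
          fun ⟨hx, hxs⟩ ↦ ⟨⟨hx, hs.1.trans_eq (Eq.symm hxs)⟩, hxs⟩⟩
      · exact iff_of_false (fun ⟨⟨hx, htx⟩, hxs⟩ ↦ hs (hxs ▸ ⟨htx, inner_le_suppFn hK θ hx⟩))
          (notMem_empty x)
    rw [hslice, indicator_apply]
    split_ifs <;> simp [g]
  calc sectionTail K θ t = (∫ s in Ioc t (suppFn K θ), (g s).toReal) / (volume K).toReal := by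
        simp_rw [sectionTail, integral_of_le ht, hpsi, MeasureTheory.integral_div]
    _ = (∫⁻ s in Icc t (suppFn K θ), g s).toReal / (volume K).toReal := by
        rw [integral_toReal hg.aemeasurable (ae_restrict_of_ae hg_fin),
          Measure.restrict_congr_set Ioc_ae_eq_Icc]
    _ = _ := by
        rw [hcap, ENNReal.toReal_mul, NNReal.coe_div, ENNReal.coe_toNNReal_eq_toReal]
        simp only [ENNReal.coe_toReal]
        ring

/-- For a convex body `K ⊆ ℝᵈ`, a unit vector `θ`, and `t ∈ [m_{K,θ}, h_K(θ)]` (where `m` is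
the median, `A_{K,θ}(m) = 1/2`):
`A_{K,θ}(t) ≥ (1/2) ((h_K(θ)-t)/(h_K(θ)-m))^d`. -/
theorem sectionTail_tail_bound
    (d : ℕ) (hd : 1 ≤ d) (K : Set (Euc d)) (hK : IsConvexBody K)
    (θ : Euc d) (hθ : ‖θ‖ = 1)
    (m : ℝ) (hm : sectionTail K θ m = 1 / 2)
    (t : ℝ) (ht : t ∈ Set.Icc m (suppFn K θ)) :
    (1 / 2) * ((suppFn K θ - t) / (suppFn K θ - m)) ^ (d : ℝ) ≤ sectionTail K θ t := by
  obtain ⟨n, rfl⟩ : ∃ n, d = n + 1 := ⟨d - 1, by omega⟩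
  obtain ⟨hKc, hKconv, hKint⟩ := hK
  obtain ⟨R, hR⟩ := exists_sectionTail_eq_mul_volume hKc hθ
  obtain ⟨x₀, hx₀K, hx₀⟩ := exists_mem_inner_eq_suppFn hKc (hKint.mono interior_subset) θ
  have hcap := hKconv.ofReal_pow_mul_addHaar_inter_le volume (innerₛₗ ℝ θ) hx₀K ht.1
    (by simpa [hx₀] using ht.2)
  simp only [innerₛₗ_apply_apply, hx₀, finrank_euclideanSpace_fin] at hcap
  have hfin : volume (K ∩ {x | t ≤ ⟪θ, x⟫}) ≠ ⊤ :=
    ((measure_mono inter_subset_left).trans_lt hKc.measure_lt_top).ne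
  have hr : 0 ≤ ((suppFn K θ - t) / (suppFn K θ - m)) ^ (n + 1) :=
    pow_nonneg (div_nonneg (sub_nonneg.2 ht.2) (sub_nonneg.2 (ht.1.trans ht.2))) _
  rw [hR m (ht.1.trans ht.2)] at hm
  rw [Real.rpow_natCast, hR t ht.2]
  calc 1 / 2 * ((suppFn K θ - t) / (suppFn K θ - m)) ^ (n + 1)
      = R * (ENNReal.ofReal (((suppFn K θ - t) / (suppFn K θ - m)) ^ (n + 1))
          * volume (K ∩ {x | m ≤ ⟪θ, x⟫})).toReal := by
        rw [ENNReal.toReal_mul, ENNReal.toReal_ofReal hr, mul_left_comm, hm, mul_comm]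
    _ ≤ R * (volume (K ∩ {x | t ≤ ⟪θ, x⟫})).toReal :=
        mul_le_mul_of_nonneg_left (ENNReal.toReal_mono hfin hcap) R.2
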